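/- Let p > 0 with 2/p ∈ ℕ. For all ω ≥ 0, φ ∈ [0,2π) and r > 0, the differential formula (d/dr)[r^{1+(p−1)ω}·𝒥_{ω+1,φ}^{[p]}(r)] = r^{1+(p−1)ω}·𝒥_{ω,φ}^{[p]}(r) holds. -/

import Mathlib

/-!
After multiplication by `r ^ (1 + (p - 1) ω)` the `k`-th term of `𝒥_{ω+1,φ}^{[p]}` becomes
`b_k r ^ (2k + 2 + pω)`, with `b_k = calJCoeff p ω φ k`. Differentiating brings down
`2k + 2 + pω = p z` with `z = (2/p)(k+1) + ω`, and `z / Γ(z + 1) = 1 / Γ(z)` turns the result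
into the `k`-th term of `r ^ (1 + (p - 1) ω) 𝒥_{ω,φ}^{[p]}`. Term-by-term differentiation is
legitimate because `|b_k| ≤ C D^k / k!`. Since `q = 2/p` is an integer, the Gamma values in `b_k`
compare with factorials: the two in each term of the angular sum have product at most
`16/9 (qk + 2q + 2)!`, the one in the denominator is at least `(qk + q)!`, and
`(2n)! (2(k - n))! ≥ k!`.
-/

/-- The one-variable generalized Bessel function `𝒥_{ω,φ}^{[p]}(r)`, via its series. -/
noncomputable def calJ (p ω φ r : ℝ) : ℝ :=
  ((2 / p) ^ 2 / Real.Gamma (1 / p) ^ 2) *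
    ∑' k : ℕ, (p ^ (2 * k) * (-1 : ℝ) ^ k / Real.Gamma ((2 / p) * ((k : ℝ) + 1) + ω)) *
      (r / p) ^ (2 * (k : ℝ) + ω) *
      ∑ n ∈ Finset.range (k + 1),
        Real.Gamma ((2 * (n : ℝ) + 1) / p) * Real.Gamma ((2 * ((k - n : ℕ) : ℝ) + 1) / p) /
            ((Nat.factorial (2 * n) : ℝ) * (Nat.factorial (2 * (k - n)) : ℝ)) *
          (|Real.cos φ| ^ (4 * (n : ℝ) / p) * |Real.sin φ| ^ (4 * ((k - n : ℕ) : ℝ) / p))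

open Real

namespace Real

theorem Gamma_le_four_thirds_mul_Gamma_add_two {x : ℝ} (hx : 1 / 2 ≤ x) :
    Gamma x ≤ 4 / 3 * Gamma (x + 2) := by
  have hx0 : 0 < x := by linarith
  rw [show x + 2 = x + 1 + 1 by ring, Gamma_add_one (by linarith), Gamma_add_one hx0.ne']
  nlinarith [mul_nonneg (mul_nonneg (by linarith : 0 ≤ x - 1 / 2) (by linarith : 0 ≤ x + 3 / 2))
    (Gamma_pos_of_pos hx0).le]

theorem Gamma_le_four_thirds_mul_factorial {x : ℝ} {m : ℕ} (hx : 1 / 2 ≤ x) (hxm : x ≤ m) :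
    Gamma x ≤ 4 / 3 * (m + 1).factorial := by
  have hm : (0 : ℝ) ≤ m := m.cast_nonneg
  have hmono : Gamma (x + 2) ≤ Gamma ((m + 1 : ℕ) + 1) :=
    Gamma_strictMonoOn_Ici.monotoneOn (Set.mem_Ici.mpr (by linarith))
      (Set.mem_Ici.mpr (by push_cast; linarith)) (by push_cast; linarith)
  rw [Gamma_nat_eq_factorial] at hmono
  linarith [Gamma_le_four_thirds_mul_Gamma_add_two hx]

theorem factorial_le_Gamma {x : ℝ} {m : ℕ} (hm : 1 ≤ m) (hmx : m + 1 ≤ x) :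
    (m.factorial : ℝ) ≤ Gamma x := by
  have hm' : (1 : ℝ) ≤ m := by exact_mod_cast hm
  rw [← Gamma_nat_eq_factorial]
  exact Gamma_strictMonoOn_Ici.monotoneOn (Set.mem_Ici.mpr (by linarith))
    (Set.mem_Ici.mpr (by linarith)) hmx

theorem rpow_two_mul_natCast_add {x : ℝ} (hx : 0 < x) (k : ℕ) (c : ℝ) :
    x ^ (2 * (k : ℝ) + c) = x ^ (2 * k) * x ^ c := by
  rw [rpow_add hx, ← rpow_natCast]
  push_cast
  rfl

end Real

namespace Nat

theorem factorial_le_factorial_mul_factorial {k a b : ℕ} (h : k ≤ a ∨ k ≤ b) :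
    k ! ≤ a ! * b ! := by
  rcases h with h | h
  · exact (factorial_le h).trans (Nat.le_mul_of_pos_right _ (factorial_pos b))
  · exact (factorial_le h).trans (Nat.le_mul_of_pos_left _ (factorial_pos a))

theorem factorial_add_le_factorial_mul_pow (n m : ℕ) : (n + m)! ≤ n ! * (n + m) ^ m := by
  rw [← factorial_mul_ascFactorial]
  exact Nat.mul_le_mul_left _ (ascFactorial_le_pow_add n m)

end Nat

theorem hasDerivAt_tsum_mul_rpow {b : ℕ → ℝ}
    (hb : ∀ R : ℝ, Summable fun k => |b k| * R ^ k) {e : ℝ} (he : 1 ≤ e) {r : ℝ}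
    (hr : 0 < r) :
    HasDerivAt (fun t => ∑' k : ℕ, b k * t ^ (2 * k + e))
      (∑' k : ℕ, b k * ((2 * k + e) * r ^ (2 * k + e - 1))) r := by
  set M := r + 1
  refine hasDerivAt_tsum_of_isPreconnected (t := Set.Ioo 0 M)
    (g := fun k t => b k * t ^ (2 * k + e))
    (g' := fun k t => b k * ((2 * k + e) * t ^ (2 * k + e - 1)))
    (u := fun k => (2 + e) * M ^ (e - 1) * (|b k| * (2 * M ^ 2) ^ k)) ((hb _).mul_left _)
    isOpen_Ioo isPreconnected_Ioo (fun k t ht => ?_) (fun k t ht => ?_) (y₀ := r)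
    ⟨hr, by linarith⟩ ?_ ⟨hr, by linarith⟩
  · exact (hasDerivAt_rpow_const (Or.inl ht.1.ne')).const_mul (b k)
  · obtain ⟨ht0, htM⟩ := ht
    have hexp : (2 * k + e : ℝ) ≤ (2 + e) * 2 ^ k := by
      have : (k + 1 : ℝ) ≤ 2 ^ k := by exact_mod_cast Nat.lt_two_pow_self
      nlinarith
    have hpow : t ^ (2 * k + e - 1) ≤ (M ^ 2) ^ k * M ^ (e - 1) := by
      rw [add_sub_assoc, rpow_two_mul_natCast_add ht0, pow_mul]
      gcongr
    rw [norm_mul, norm_mul, Real.norm_eq_abs, norm_of_nonneg (by positivity),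
      norm_of_nonneg (by positivity)]
    calc |b k| * ((2 * k + e) * t ^ (2 * k + e - 1))
        ≤ |b k| * ((2 + e) * 2 ^ k * ((M ^ 2) ^ k * M ^ (e - 1))) := by gcongr
      _ = _ := by ring_nf
  · refine .of_norm_bounded ((hb (r ^ 2)).mul_left (r ^ e)) fun k => ?_
    rw [rpow_two_mul_natCast_add hr, pow_mul, norm_mul, norm_mul, Real.norm_eq_abs, norm_pow,
      norm_of_nonneg (by positivity), norm_of_nonneg (by positivity)]
    exact le_of_eq (by ring_nf)

noncomputable def angularSum (p φ : ℝ) (k : ℕ) : ℝ :=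
  ∑ n ∈ Finset.range (k + 1),
    Gamma ((2 * (n : ℝ) + 1) / p) * Gamma ((2 * ((k - n : ℕ) : ℝ) + 1) / p) /
        ((Nat.factorial (2 * n) : ℝ) * (Nat.factorial (2 * (k - n)) : ℝ)) *
      (|cos φ| ^ (4 * (n : ℝ) / p) * |sin φ| ^ (4 * ((k - n : ℕ) : ℝ) / p))

noncomputable def calJCoeff (p ω φ : ℝ) (k : ℕ) : ℝ :=
  (-1) ^ k * angularSum p φ k / (Gamma (2 / p * (k + 1) + (ω + 1)) * p ^ (ω + 1))

section Bounds

variable {p : ℝ} {q : ℕ}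

theorem one_le_of_natCast_eq_two_div (hp : 0 < p) (hq : (q : ℝ) = 2 / p) : 1 ≤ q := by
  have : (0 : ℝ) < q := hq ▸ by positivity
  exact_mod_cast this

theorem Gamma_two_mul_add_one_div_le (hp : 0 < p) (hq : (q : ℝ) = 2 / p) (n : ℕ) :
    Gamma ((2 * n + 1) / p) ≤ 4 / 3 * (q * n + q + 1).factorial := by
  have hq1 : (1 : ℝ) ≤ q := by exact_mod_cast one_le_of_natCast_eq_two_div hp hq
  have hx : (2 * n + 1) / p = q * n + q / 2 := by rw [hq]; field_simp
  apply Gamma_le_four_thirds_mul_factorial <;> rw [hx]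
  · nlinarith [(n.cast_nonneg : (0 : ℝ) ≤ n)]
  · push_cast; linarith

theorem angularSum_nonneg (hp : 0 < p) (φ : ℝ) (k : ℕ) : 0 ≤ angularSum p φ k :=
  Finset.sum_nonneg fun _ _ => by positivity

theorem angularSum_le (hp : 0 < p) (hq : (q : ℝ) = 2 / p) (φ : ℝ) (k : ℕ) :
    angularSum p φ k ≤
      (k + 1) * ((16 / 9 : ℝ) * (q * k + 2 * q + 2).factorial / k.factorial) := by
  calc angularSum p φ k ≤ ∑ _n ∈ Finset.range (k + 1),
        (16 / 9 : ℝ) * (q * k + 2 * q + 2).factorial / k.factorial :=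
        Finset.sum_le_sum fun n hn => ?_
    _ = _ := by simp
  have hnk : n ≤ k := Nat.lt_succ_iff.mp (Finset.mem_range.mp hn)
  have htrig : |cos φ| ^ (4 * (n : ℝ) / p) * |sin φ| ^ (4 * ((k - n : ℕ) : ℝ) / p) ≤ 1 :=
    mul_le_one₀ (rpow_le_one (abs_nonneg _) (abs_cos_le_one φ) (by positivity)) (by positivity)
      (rpow_le_one (abs_nonneg _) (abs_sin_le_one φ) (by positivity))
  have hfactorials : (q * n + q + 1).factorial * (q * (k - n) + q + 1).factorial ≤
      (q * k + 2 * q + 2).factorial := by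
    have hsum : q * n + q + 1 + (q * (k - n) + q + 1) = q * k + 2 * q + 2 := by
      rw [show q * k = q * n + q * (k - n) by rw [← Nat.mul_add, Nat.add_sub_cancel' hnk]]
      ring
    exact hsum ▸
      Nat.le_of_dvd (Nat.factorial_pos _) (Nat.factorial_mul_factorial_dvd_factorial_add _ _)
  have hGamma : Gamma ((2 * (n : ℝ) + 1) / p) * Gamma ((2 * ((k - n : ℕ) : ℝ) + 1) / p) ≤
      16 / 9 * (q * k + 2 * q + 2).factorial := by
    calc _ ≤ (4 / 3 : ℝ) * (q * n + q + 1).factorial *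
          (4 / 3 * (q * (k - n) + q + 1).factorial) :=
          mul_le_mul (Gamma_two_mul_add_one_div_le hp hq n)
            (Gamma_two_mul_add_one_div_le hp hq (k - n)) (by positivity) (by positivity)
      _ ≤ _ := by
          rw [mul_mul_mul_comm]
          gcongr
          · norm_num
          · exact_mod_cast hfactorials
  have hk : (k.factorial : ℝ) ≤ (2 * n).factorial * (2 * (k - n)).factorial := by
    exact_mod_cast Nat.factorial_le_factorial_mul_factorial (by omega)
  calc _ ≤ Gamma ((2 * (n : ℝ) + 1) / p) * Gamma ((2 * ((k - n : ℕ) : ℝ) + 1) / p) /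
        ((2 * n).factorial * (2 * (k - n)).factorial) * 1 := by gcongr
    _ ≤ 16 / 9 * (q * k + 2 * q + 2).factorial /
        ((2 * n).factorial * (2 * (k - n)).factorial) := by
        rw [mul_one]; gcongr
    _ ≤ _ := by gcongr

theorem abs_calJCoeff_le (hp : 0 < p) (hq : (q : ℝ) = 2 / p) {ω : ℝ} (hω : 0 ≤ ω)
    (φ : ℝ) (k : ℕ) :
    |calJCoeff p ω φ k| ≤
      16 / 9 * (2 * q + 2) ^ (q + 2) / p ^ (ω + 1) * (2 ^ (q + 3)) ^ k / k.factorial := by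
  have hq1 : 1 ≤ q := one_le_of_natCast_eq_two_div hp hq
  have hq1' : (1 : ℝ) ≤ q := by exact_mod_cast hq1
  have habs : |calJCoeff p ω φ k| =
      angularSum p φ k / (Gamma (2 / p * (k + 1) + (ω + 1)) * p ^ (ω + 1)) := by
    rw [calJCoeff, abs_div, abs_mul, abs_pow, abs_neg, abs_one, one_pow, one_mul,
      abs_of_nonneg (angularSum_nonneg hp φ k), abs_of_pos (by positivity)]
  have hGamma : ((q * k + q).factorial : ℝ) ≤ Gamma (2 / p * (k + 1) + (ω + 1)) :=
    factorial_le_Gamma (by nlinarith) (by rw [← hq]; push_cast; nlinarith)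
  have hfactorial : ((q * k + 2 * q + 2).factorial : ℝ) ≤
      (q * k + q).factorial * ((2 * q + 2) ^ (q + 2) * (k + 1) ^ (q + 2)) := by
    have h := Nat.factorial_add_le_factorial_mul_pow (q * k + q) (q + 2)
    rw [show q * k + q + (q + 2) = q * k + 2 * q + 2 by ring] at h
    calc _ ≤ ((q * k + q).factorial : ℝ) * ((q * k + 2 * q + 2 : ℕ) : ℝ) ^ (q + 2) := by
          exact_mod_cast h
      _ ≤ _ := by
          rw [← mul_pow]
          gcongr
          push_cast
          nlinarith [(k.cast_nonneg : (0 : ℝ) ≤ k)]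
  have hpow : ((k : ℝ) + 1) ^ (q + 3) ≤ (2 ^ (q + 3)) ^ k := by
    rw [← pow_mul, mul_comm, pow_mul]
    gcongr
    exact_mod_cast Nat.lt_two_pow_self
  rw [habs]
  calc _ ≤ (k + 1) * (16 / 9 * (q * k + 2 * q + 2).factorial / k.factorial) /
        ((q * k + q).factorial * p ^ (ω + 1)) := by
        gcongr
        exact angularSum_le hp hq φ k
    _ ≤ (k + 1) * (16 / 9 * ((q * k + q).factorial *
          ((2 * q + 2) ^ (q + 2) * (k + 1) ^ (q + 2))) / k.factorial) /
        ((q * k + q).factorial * p ^ (ω + 1)) := by gcongr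
    _ = 16 / 9 * (2 * q + 2) ^ (q + 2) / p ^ (ω + 1) * (k + 1) ^ (q + 3) / k.factorial := by
        field_simp
        ring
    _ ≤ _ := by gcongr

theorem summable_abs_calJCoeff_mul_pow (hp : 0 < p) (hq : (q : ℝ) = 2 / p) {ω : ℝ}
    (hω : 0 ≤ ω) (φ R : ℝ) : Summable fun k => |calJCoeff p ω φ k| * R ^ k := by
  refine .of_norm_bounded ((summable_pow_div_factorial (2 ^ (q + 3) * |R|)).mul_left
    (16 / 9 * (2 * q + 2) ^ (q + 2) / p ^ (ω + 1))) fun k => ?_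
  calc ‖|calJCoeff p ω φ k| * R ^ k‖ = |calJCoeff p ω φ k| * |R| ^ k := by
        rw [norm_mul, norm_pow, Real.norm_eq_abs, Real.norm_eq_abs, abs_abs]
    _ ≤ 16 / 9 * (2 * q + 2) ^ (q + 2) / p ^ (ω + 1) * (2 ^ (q + 3)) ^ k / k.factorial *
          |R| ^ k := by
        gcongr
        exact abs_calJCoeff_le hp hq hω φ k
    _ = _ := by ring

end Bounds

section Series

variable {p : ℝ}

theorem calJ_eq_tsum_angularSum (ω φ r : ℝ) :
    calJ p ω φ r = (2 / p) ^ 2 / Gamma (1 / p) ^ 2 * ∑' k : ℕ,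
      p ^ (2 * k) * (-1) ^ k / Gamma (2 / p * (k + 1) + ω) * (r / p) ^ (2 * (k : ℝ) + ω) *
        angularSum p φ k :=
  rfl

theorem rpow_mul_calJ_add_one (hp : 0 < p) (ω φ : ℝ) {t : ℝ} (ht : 0 < t) :
    t ^ (1 + (p - 1) * ω) * calJ p (ω + 1) φ t = (2 / p) ^ 2 / Gamma (1 / p) ^ 2 *
      ∑' k : ℕ, calJCoeff p ω φ k * t ^ (2 * k + (2 + p * ω)) := by
  rw [calJ_eq_tsum_angularSum, mul_left_comm, ← tsum_mul_left]
  congr 1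
  refine tsum_congr fun k => ?_
  have ht_pow : t ^ (2 * k + (2 + p * ω)) =
      t ^ (1 + (p - 1) * ω) * t ^ (2 * (k : ℝ) + (ω + 1)) := by
    rw [← rpow_add ht]; ring_nf
  rw [calJCoeff, div_rpow ht.le hp.le, rpow_two_mul_natCast_add hp, ht_pow]
  field_simp

theorem rpow_mul_calJ (hp : 0 < p) {ω : ℝ} (hω : 0 ≤ ω) (φ : ℝ) {r : ℝ} (hr : 0 < r) :
    r ^ (1 + (p - 1) * ω) * calJ p ω φ r = (2 / p) ^ 2 / Gamma (1 / p) ^ 2 *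
      ∑' k : ℕ,
        calJCoeff p ω φ k * ((2 * k + (2 + p * ω)) * r ^ (2 * k + (2 + p * ω) - 1)) := by
  rw [calJ_eq_tsum_angularSum, mul_left_comm, ← tsum_mul_left]
  congr 1
  refine tsum_congr fun k => ?_
  set z := 2 / p * ((k : ℝ) + 1) + ω
  have hz : 0 < z := by positivity
  have hr_pow : r ^ (2 * k + (2 + p * ω) - 1) =
      r ^ (1 + (p - 1) * ω) * r ^ (2 * (k : ℝ) + ω) := by
    rw [← rpow_add hr]; ring_nf
  have hpz : 2 * (k : ℝ) + (2 + p * ω) = p * z := by simp only [z]; field_simp; ring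
  rw [hr_pow, hpz, calJCoeff, div_rpow hr.le hp.le, rpow_two_mul_natCast_add hp,
    show 2 / p * ((k : ℝ) + 1) + (ω + 1) = z + 1 by ring, Gamma_add_one hz.ne',
    rpow_add_one hp.ne']
  field_simp

end Series

theorem calJ_deriv_formula_general (p : ℝ) (hp : 0 < p) (hq : ∃ q : ℕ, (q : ℝ) = 2 / p)
    (ω φ : ℝ) (hω : 0 ≤ ω) (r : ℝ) (hr : 0 < r) :
    HasDerivAt (fun t : ℝ => t ^ (1 + (p - 1) * ω) * calJ p (ω + 1) φ t)
      (r ^ (1 + (p - 1) * ω) * calJ p ω φ r) r := by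
  obtain ⟨q, hq⟩ := hq
  have hseries := (hasDerivAt_tsum_mul_rpow (summable_abs_calJCoeff_mul_pow hp hq hω φ)
    (by nlinarith : 1 ≤ 2 + p * ω) hr).const_mul ((2 / p) ^ 2 / Gamma (1 / p) ^ 2)
  rw [← rpow_mul_calJ hp hω φ hr] at hseries
  refine hseries.congr_of_eventuallyEq ?_
  filter_upwards [lt_mem_nhds hr] with t ht using rpow_mul_calJ_add_one hp ω φ ht

theorem calJ_deriv_formula (p : ℝ) (hp : 0 < p) (hq : ∃ q : ℕ, (q : ℝ) = 2 / p)
    (ω φ : ℝ) (hω : 0 ≤ ω) (hφ : φ ∈ Set.Ico 0 (2 * Real.pi)) (r : ℝ) (hr : 0 < r) :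
    HasDerivAt (fun t : ℝ => t ^ (1 + (p - 1) * ω) * calJ p (ω + 1) φ t)
      (r ^ (1 + (p - 1) * ω) * calJ p ω φ r) r :=
  calJ_deriv_formula_general p hp hq ω φ hω r hr
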